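/- arXiv:math/9801049 — 2 statements merged into one kernel-verified Lean document; each statement's English description precedes it below -/
import Mathlib

section
/- Let Λ be a positive definite symmetric n×n real matrix and let Z = ∫_{ℝ^n} exp(−xᵀΛx/2) dx. Then for all indices i, j, the function x ↦ x_i·x_j·exp(−xᵀΛx/2) is integrable on ℝ^n and (1/Z) · ∫_{ℝ^n} x_i·x_j·exp(−xᵀΛx/2) dx = (Λ⁻¹)_{ij}, the (i,j) entry of the inverse matrix of Λ. -/
/-!
Write `Λ = B²` with `B = √Λ` and put `S = B⁻¹`, so that `Sᵀ Λ S = 1` and `S Sᵀ = Λ⁻¹`.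
The substitution `x = S y` turns `exp (-xᵀΛx/2)` into the standard Gaussian weight
`exp (-|y|²/2) = ∏ₘ exp (-yₘ²/2)`, whose second moments `∫ yₖ yₗ exp (-|y|²/2)` are
`δₖₗ (2π)^{n/2}` by Fubini and the one-dimensional moments `√(2π), 0, √(2π)`.
Since `xᵢ xⱼ = ∑ₖₗ Sᵢₖ Sⱼₗ yₖ yₗ`, the numerator is `|det S| (2π)^{n/2} (S Sᵀ)ᵢⱼ`,
while `Z = |det S| (2π)^{n/2}`.
-/

open Matrix Real MeasureTheory

lemma integrable_exp_neg_sq_div_two : Integrable fun x : ℝ => exp (-x ^ 2 / 2) := by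
  simpa [neg_div, div_eq_inv_mul, mul_comm] using
    integrable_exp_neg_mul_sq (b := 1 / 2) (by norm_num)

lemma integrable_mul_exp_neg_sq_div_two : Integrable fun x : ℝ => x * exp (-x ^ 2 / 2) := by
  simpa [neg_div, div_eq_inv_mul, mul_comm] using
    integrable_mul_exp_neg_mul_sq (b := 1 / 2) (by norm_num)

lemma integrable_sq_mul_exp_neg_sq_div_two :
    Integrable fun x : ℝ => x ^ 2 * exp (-x ^ 2 / 2) := by
  simpa [neg_div, div_eq_inv_mul, mul_comm] using
    integrable_rpow_mul_exp_neg_mul_sq (b := 1 / 2) (by norm_num) (s := 2) (by norm_num)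

lemma integral_exp_neg_sq_div_two : ∫ x : ℝ, exp (-x ^ 2 / 2) = √(2 * π) := by
  simpa [neg_div, div_eq_inv_mul, mul_comm, div_div_eq_mul_div] using integral_gaussian (1 / 2)

lemma integral_mul_exp_neg_sq_div_two : ∫ x : ℝ, x * exp (-x ^ 2 / 2) = 0 := by
  have h := integral_neg_eq_self (fun x : ℝ => x * exp (-x ^ 2 / 2)) volume
  simp only [neg_sq, neg_mul, integral_neg] at h
  linarith

-- Integration by parts against `x e^{-x²/2} = (-e^{-x²/2})'`.
lemma integral_sq_mul_exp_neg_sq_div_two : ∫ x : ℝ, x ^ 2 * exp (-x ^ 2 / 2) = √(2 * π) := by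
  have hv (x : ℝ) : HasDerivAt (fun t => -exp (-t ^ 2 / 2)) (x * exp (-x ^ 2 / 2)) x :=
    (((hasDerivAt_pow 2 x).fun_neg.div_const 2).exp).fun_neg.congr_deriv (by simp; ring)
  have key := integral_mul_deriv_eq_deriv_mul_of_integrable (u := id) (u' := fun _ => 1)
    (fun x _ => hasDerivAt_id x) (fun x _ => hv x)
    (by simpa [Pi.mul_def, ← mul_assoc, ← sq] using integrable_sq_mul_exp_neg_sq_div_two)
    (by simpa [Pi.mul_def] using integrable_exp_neg_sq_div_two.neg)
    (by simpa [Pi.mul_def] using integrable_mul_exp_neg_sq_div_two.neg)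
  simpa [← mul_assoc, ← sq, integral_neg, integral_exp_neg_sq_div_two] using key

section StandardGaussian

variable {ι : Type*} [Fintype ι]

lemma exp_neg_dotProduct_self_div_two (y : ι → ℝ) :
    exp (-(y ⬝ᵥ y) / 2) = ∏ m, exp (-y m ^ 2 / 2) := by
  rw [← exp_sum]
  simp only [dotProduct, ← sq, neg_div, Finset.sum_div, Finset.sum_neg_distrib]

lemma integral_exp_neg_dotProduct_self_div_two :
    ∫ y : ι → ℝ, exp (-(y ⬝ᵥ y) / 2) = √(2 * π) ^ Fintype.card ι := by
  simp_rw [exp_neg_dotProduct_self_div_two]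
  rw [integral_fintype_prod_volume_eq_pow (fun t => exp (-t ^ 2 / 2)),
    integral_exp_neg_sq_div_two]

lemma mulVec_mul_mulVec_mul_eq_sum {R : Type*} [CommSemiring R] (S : Matrix ι ι R) (i j : ι)
    (y : ι → R) (c : R) :
    (S *ᵥ y) i * (S *ᵥ y) j * c = ∑ k, ∑ l, S i k * S j l * (y k * y l * c) := by
  simp only [mulVec, dotProduct]
  rw [Finset.sum_mul_sum, Finset.sum_mul]
  simp only [Finset.sum_mul]
  exact Finset.sum_congr rfl fun k _ => Finset.sum_congr rfl fun l _ => by ring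

variable [DecidableEq ι]

lemma mul_mul_exp_neg_dotProduct_self_div_two_eq_prod (k l : ι) (y : ι → ℝ) :
    y k * y l * exp (-(y ⬝ᵥ y) / 2) =
      ∏ m, (if m = k then y m else 1) * (if m = l then y m else 1) * exp (-y m ^ 2 / 2) := by
  simp only [Finset.prod_mul_distrib, Finset.prod_ite_eq', Finset.mem_univ, if_true,
    exp_neg_dotProduct_self_div_two]

lemma integrable_mul_mul_exp_neg_dotProduct_self_div_two (k l : ι) :
    Integrable fun y : ι → ℝ => y k * y l * exp (-(y ⬝ᵥ y) / 2) := by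
  simp_rw [mul_mul_exp_neg_dotProduct_self_div_two_eq_prod k l]
  refine Integrable.fintype_prod (f := fun m t =>
    (if m = k then t else 1) * (if m = l then t else 1) * exp (-t ^ 2 / 2)) fun m => ?_
  rcases eq_or_ne m k with rfl | hk <;> rcases eq_or_ne m l with rfl | hl <;>
    simp [*, ← sq, integrable_exp_neg_sq_div_two, integrable_mul_exp_neg_sq_div_two,
      integrable_sq_mul_exp_neg_sq_div_two]

lemma integral_mul_mul_exp_neg_dotProduct_self_div_two (k l : ι) :
    ∫ y : ι → ℝ, y k * y l * exp (-(y ⬝ᵥ y) / 2) =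
      if k = l then √(2 * π) ^ Fintype.card ι else 0 := by
  simp_rw [mul_mul_exp_neg_dotProduct_self_div_two_eq_prod k l]
  rw [integral_fintype_prod_volume_eq_prod (fun m t =>
    (if m = k then t else 1) * (if m = l then t else 1) * exp (-t ^ 2 / 2))]
  split_ifs with hkl
  · subst hkl
    rw [← Finset.card_univ, ← Finset.prod_const]
    refine Finset.prod_congr rfl fun m _ => ?_
    rcases eq_or_ne m k with rfl | hm <;>
      simp [*, ← sq, integral_exp_neg_sq_div_two, integral_sq_mul_exp_neg_sq_div_two]
  · exact Finset.prod_eq_zero (Finset.mem_univ k) (by simp [hkl, integral_mul_exp_neg_sq_div_two])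

lemma integrable_mulVec_mul_mulVec_mul_exp_neg_dotProduct_self_div_two
    (S : Matrix ι ι ℝ) (i j : ι) :
    Integrable fun y : ι → ℝ => (S *ᵥ y) i * (S *ᵥ y) j * exp (-(y ⬝ᵥ y) / 2) := by
  simp_rw [mulVec_mul_mulVec_mul_eq_sum]
  exact integrable_finsetSum _ fun k _ => integrable_finsetSum _ fun l _ =>
    (integrable_mul_mul_exp_neg_dotProduct_self_div_two k l).const_mul _

lemma integral_mulVec_mul_mulVec_mul_exp_neg_dotProduct_self_div_two
    (S : Matrix ι ι ℝ) (i j : ι) :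
    ∫ y : ι → ℝ, (S *ᵥ y) i * (S *ᵥ y) j * exp (-(y ⬝ᵥ y) / 2) =
      (S * Sᵀ) i j * √(2 * π) ^ Fintype.card ι := by
  simp_rw [mulVec_mul_mulVec_mul_eq_sum]
  rw [integral_finsetSum _ fun k _ => integrable_finsetSum _ fun l _ =>
    (integrable_mul_mul_exp_neg_dotProduct_self_div_two k l).const_mul _]
  simp_rw [integral_finsetSum _ fun l _ =>
    (integrable_mul_mul_exp_neg_dotProduct_self_div_two _ l).const_mul _, integral_const_mul,
    integral_mul_mul_exp_neg_dotProduct_self_div_two]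
  simp [mul_apply, Finset.sum_mul]

end StandardGaussian

section LinearChangeOfVariables

variable {ι : Type*} [Fintype ι] [DecidableEq ι]

lemma measurableEmbedding_mulVec {M : Matrix ι ι ℝ} (hM : M.det ≠ 0) :
    MeasurableEmbedding (M *ᵥ ·) :=
  let e := (M.toLinearEquiv' (M.invertibleOfIsUnitDet hM.isUnit)).toContinuousLinearEquiv
  e.toHomeomorph.measurableEmbedding

lemma map_mulVec_volume {M : Matrix ι ι ℝ} (hM : M.det ≠ 0) :
    Measure.map (M *ᵥ ·) volume = ENNReal.ofReal |M.det|⁻¹ • volume := by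
  rw [← abs_inv]
  exact Real.map_matrix_volume_pi_eq_smul_volume_pi hM

lemma integral_comp_mulVec {E : Type*} [NormedAddCommGroup E] [NormedSpace ℝ E]
    {M : Matrix ι ι ℝ} (hM : M.det ≠ 0) (f : (ι → ℝ) → E) :
    ∫ y, f (M *ᵥ y) = |M.det|⁻¹ • ∫ x, f x := by
  rw [← (measurableEmbedding_mulVec hM).integral_map, map_mulVec_volume hM, integral_smul_measure,
    ENNReal.toReal_ofReal (by positivity)]

lemma integrable_comp_mulVec_iff {E : Type*} [NormedAddCommGroup E]
    {M : Matrix ι ι ℝ} (hM : M.det ≠ 0) {f : (ι → ℝ) → E} :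
    Integrable (fun y => f (M *ᵥ y)) ↔ Integrable f := by
  rw [← Function.comp_def, ← (measurableEmbedding_mulVec hM).integrable_map_iff,
    map_mulVec_volume hM, integrable_smul_measure (by simpa using hM) ENNReal.ofReal_ne_top]

end LinearChangeOfVariables

section Whitening

variable {ι : Type*} [Fintype ι]

lemma mulVec_dotProduct_mulVec_mulVec (S Λ : Matrix ι ι ℝ) (y : ι → ℝ) :
    S *ᵥ y ⬝ᵥ Λ *ᵥ (S *ᵥ y) = y ⬝ᵥ (Sᵀ * Λ * S) *ᵥ y := by
  rw [mulVec_mulVec, dotProduct_mulVec, vecMul_mulVec, ← dotProduct_mulVec, ← mul_assoc]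

variable [DecidableEq ι]

lemma Matrix.PosDef.exists_transpose_mul_mul_eq_one {Λ : Matrix ι ι ℝ} (hΛ : Λ.PosDef) :
    ∃ S : Matrix ι ι ℝ, Sᵀ * Λ * S = 1 := by
  open MatrixOrder in
  obtain ⟨B, hBB, hBsymm⟩ : ∃ B : Matrix ι ι ℝ, B * B = Λ ∧ Bᵀ = B :=
    ⟨CFC.sqrt Λ, CFC.sqrt_mul_sqrt_self Λ hΛ.posSemidef.nonneg,
      (CFC.sqrt_nonneg Λ).posSemidef.isHermitian⟩
  have hB : IsUnit B.det := by
    have := hΛ.det_pos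
    rw [← hBB, det_mul] at this
    exact (mul_self_pos.mp this).isUnit
  refine ⟨B⁻¹, ?_⟩
  rw [transpose_nonsing_inv, hBsymm, ← hBB, nonsing_inv_mul_cancel_left _ _ hB,
    mul_nonsing_inv _ hB]

lemma Matrix.inv_eq_mul_transpose_of_transpose_mul_mul_eq_one {S Λ : Matrix ι ι ℝ}
    (hS : Sᵀ * Λ * S = 1) : Λ⁻¹ = S * Sᵀ := by
  rw [mul_eq_one_comm] at hS
  exact inv_eq_left_inv (by rw [mul_assoc, hS])

lemma integral_mul_exp_neg_dotProduct_mulVec_div_two {S Λ : Matrix ι ι ℝ} (hS : Sᵀ * Λ * S = 1)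
    (g : (ι → ℝ) → ℝ) :
    ∫ x, g x * exp (-(x ⬝ᵥ Λ *ᵥ x) / 2) = |S.det| * ∫ y, g (S *ᵥ y) * exp (-(y ⬝ᵥ y) / 2) := by
  have hS₀ := det_ne_zero_of_left_inverse hS
  have h := integral_comp_mulVec hS₀ fun x => g x * exp (-(x ⬝ᵥ Λ *ᵥ x) / 2)
  simp only [mulVec_dotProduct_mulVec_mulVec, hS, one_mulVec, smul_eq_mul] at h
  rw [h, mul_inv_cancel_left₀ (abs_ne_zero.mpr hS₀)]

lemma integrable_mul_exp_neg_dotProduct_mulVec_div_two_iff {S Λ : Matrix ι ι ℝ}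
    (hS : Sᵀ * Λ * S = 1) {g : (ι → ℝ) → ℝ} :
    Integrable (fun x => g x * exp (-(x ⬝ᵥ Λ *ᵥ x) / 2)) ↔
      Integrable fun y => g (S *ᵥ y) * exp (-(y ⬝ᵥ y) / 2) := by
  rw [← integrable_comp_mulVec_iff (det_ne_zero_of_left_inverse hS)]
  simp only [mulVec_dotProduct_mulVec_mulVec, hS, one_mulVec]

end Whitening

theorem gaussian_second_moments (n : ℕ) (i j : Fin n)
    (Λ : Matrix (Fin n) (Fin n) ℝ) (hΛ : Λ.PosDef)
    (Z : ℝ) (hZ : Z = ∫ x : Fin n → ℝ, Real.exp (-(x ⬝ᵥ Λ.mulVec x) / 2)) :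
    Integrable (fun x : Fin n → ℝ =>
      x i * x j * Real.exp (-(x ⬝ᵥ Λ.mulVec x) / 2)) ∧
    (1 / Z) * ∫ x : Fin n → ℝ, x i * x j * Real.exp (-(x ⬝ᵥ Λ.mulVec x) / 2)
      = Λ⁻¹ i j := by
  obtain ⟨S, hS⟩ := hΛ.exists_transpose_mul_mul_eq_one
  have hZS : Z = |S.det| * √(2 * π) ^ n := by
    have h := integral_mul_exp_neg_dotProduct_mulVec_div_two hS fun _ => 1
    simp only [one_mul] at h
    rw [hZ, h, integral_exp_neg_dotProduct_self_div_two, Fintype.card_fin]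
  refine ⟨(integrable_mul_exp_neg_dotProduct_mulVec_div_two_iff hS).2
    (integrable_mulVec_mul_mulVec_mul_exp_neg_dotProduct_self_div_two S i j), ?_⟩
  rw [integral_mul_exp_neg_dotProduct_mulVec_div_two hS fun x => x i * x j,
    integral_mulVec_mul_mulVec_mul_exp_neg_dotProduct_self_div_two,
    inv_eq_mul_transpose_of_transpose_mul_mul_eq_one hS, hZS, Fintype.card_fin]
  have hS₀ : |S.det| ≠ 0 := abs_ne_zero.mpr (det_ne_zero_of_left_inverse hS)
  field_simp
end

section
/- Let Λ be a positive definite symmetric n×n real matrix, let Σ = Λ⁻¹, and let Z = ∫_{ℝ^n} exp(−xᵀΛx/2) dx. Then for all indices i, j, k, l, the function x ↦ x_i·x_j·x_k·x_l·exp(−xᵀΛx/2) is integrable on ℝ^n and (1/Z) · ∫_{ℝ^n} x_i·x_j·x_k·x_l·exp(−xᵀΛx/2) dx = Σ_{ij}·Σ_{kl} + Σ_{ik}·Σ_{jl} + Σ_{il}·Σ_{jk}. -/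
/-!
Gaussian integration by parts. Differentiating the weight `exp (-xᵀΛx/2)` in a direction `v`
produces the factor `-(vᵀΛx)`; for the row `v = Λ⁻¹ i` this factor is `-xᵢ`, so integrating by
parts along `v` turns `∫ xᵢ f(x) exp (-xᵀΛx/2) dx` into `∫ ∂ᵥf(x) exp (-xᵀΛx/2) dx`.
For `f = x_l` this gives the second moments `Λ⁻¹ k l · Z`; for `f = x_j x_k x_l` it expresses the
fourth moment through three second moments, one for each partner of `i` in a pairing.
All these integrals converge because `xᵀΛx ≥ c ‖x‖²` with `c > 0`, so the weight decays faster
than any polynomial grows.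
-/

open Matrix Real MeasureTheory Function

open scoped Nat

variable {ι : Type*} [Fintype ι]

@[fun_prop]
lemma Function.hasTemperateGrowth_apply (i : ι) :
    (fun (x : ι → ℝ) => x i).HasTemperateGrowth :=
  (ContinuousLinearMap.proj i : (ι → ℝ) →L[ℝ] ℝ).hasTemperateGrowth

lemma hasLineDerivAt_apply (i : ι) (x v : ι → ℝ) :
    HasLineDerivAt ℝ (fun y : ι → ℝ => y i) (v i) x v :=
  (hasFDerivAt_apply (𝕜 := ℝ) i x).hasLineDerivAt v

lemma HasLineDerivAt.mul {𝕜 E : Type*} [NontriviallyNormedField 𝕜] [AddCommGroup E] [Module 𝕜 E]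
    {f g : E → 𝕜} {f' g' : 𝕜} {x v : E} (hf : HasLineDerivAt 𝕜 f f' x v)
    (hg : HasLineDerivAt 𝕜 g g' x v) :
    HasLineDerivAt 𝕜 (fun y => f y * g y) (f' * g x + f x * g') x v := by
  unfold HasLineDerivAt at *
  have := hf.mul hg
  simp only [zero_smul, add_zero] at this
  exact this

lemma one_add_pow_mul_exp_neg_mul_sq_le {a t : ℝ} (ha : 0 < a) (ht : 0 ≤ t) (k : ℕ) :
    (1 + t) ^ k * exp (-(a * t ^ 2)) ≤ k ! * exp (1 + 1 / (4 * a)) := by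
  have hpow : (1 + t) ^ k ≤ k ! * exp (1 + t) := by
    have := pow_div_factorial_le_exp (1 + t) (by positivity) k
    rwa [div_le_iff₀ (by positivity), mul_comm] at this
  have hquad : 1 + t + -(a * t ^ 2) ≤ 1 + 1 / (4 * a) := by
    have : 0 ≤ (2 * a * t - 1) ^ 2 / (4 * a) := by positivity
    have e : (2 * a * t - 1) ^ 2 / (4 * a) = a * t ^ 2 - t + 1 / (4 * a) := by field_simp; ring
    linarith
  calc (1 + t) ^ k * exp (-(a * t ^ 2)) ≤ k ! * exp (1 + t) * exp (-(a * t ^ 2)) := by gcongr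
    _ = k ! * exp (1 + t + -(a * t ^ 2)) := by rw [mul_assoc, ← exp_add]
    _ ≤ k ! * exp (1 + 1 / (4 * a)) := by gcongr

variable {Λ : Matrix ι ι ℝ}

lemma Matrix.PosDef.exists_pos_mul_sq_norm_le (hΛ : Λ.PosDef) :
    ∃ c > 0, ∀ x : ι → ℝ, c * ‖x‖ ^ 2 ≤ x ⬝ᵥ Λ *ᵥ x := by
  rcases isEmpty_or_nonempty ι with hι | hι
  · exact ⟨1, one_pos, fun x => by simp [Subsingleton.elim x 0]⟩
  have hQ : Continuous fun x : ι → ℝ => x ⬝ᵥ Λ *ᵥ x := by fun_prop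
  obtain ⟨u, hu, hmin⟩ := (isCompact_sphere (0 : ι → ℝ) 1).exists_isMinOn
    (NormedSpace.sphere_nonempty.2 zero_le_one) hQ.continuousOn
  refine ⟨u ⬝ᵥ Λ *ᵥ u, hΛ.dotProduct_mulVec_pos (ne_zero_of_mem_unit_sphere ⟨u, hu⟩),
    fun x => ?_⟩
  rcases eq_or_ne x 0 with rfl | hx
  · simp
  have hmin_x := hmin (show ‖x‖⁻¹ • x ∈ Metric.sphere (0 : ι → ℝ) 1 by simp [norm_smul, hx])
  simp only [Set.mem_ofPred_eq, mulVec_smul, dotProduct_smul, smul_dotProduct, smul_eq_mul]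
    at hmin_x
  have hpos : 0 < ‖x‖ := norm_pos_iff.2 hx
  calc u ⬝ᵥ Λ *ᵥ u * ‖x‖ ^ 2 ≤ ‖x‖⁻¹ * (‖x‖⁻¹ * (x ⬝ᵥ Λ *ᵥ x)) * ‖x‖ ^ 2 := by gcongr
    _ = x ⬝ᵥ Λ *ᵥ x := by field_simp

lemma Matrix.IsSymm.dotProduct_mulVec_comm (hΛ : Λ.IsSymm) (x y : ι → ℝ) :
    x ⬝ᵥ Λ *ᵥ y = y ⬝ᵥ Λ *ᵥ x := by
  rw [dotProduct_mulVec, dotProduct_comm, ← mulVec_transpose, hΛ.eq]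

noncomputable def gaussianWeight (Λ : Matrix ι ι ℝ) (x : ι → ℝ) : ℝ :=
  exp (-(x ⬝ᵥ Λ *ᵥ x) / 2)

lemma gaussianWeight_pos (Λ : Matrix ι ι ℝ) (x : ι → ℝ) : 0 < gaussianWeight Λ x := exp_pos _

@[fun_prop]
lemma continuous_gaussianWeight (Λ : Matrix ι ι ℝ) : Continuous (gaussianWeight Λ) := by
  unfold gaussianWeight
  fun_prop

lemma hasLineDerivAt_gaussianWeight (hΛ : Λ.IsSymm) (x v : ι → ℝ) :
    HasLineDerivAt ℝ (gaussianWeight Λ) (-(v ⬝ᵥ Λ *ᵥ x) * gaussianWeight Λ x) x v := by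
  have hexpand (t : ℝ) : (x + t • v) ⬝ᵥ Λ *ᵥ (x + t • v)
      = x ⬝ᵥ Λ *ᵥ x + t * (2 * (v ⬝ᵥ Λ *ᵥ x)) + t ^ 2 * (v ⬝ᵥ Λ *ᵥ v) := by
    simp only [mulVec_add, mulVec_smul, dotProduct_add, add_dotProduct, dotProduct_smul,
      smul_dotProduct, smul_eq_mul, hΛ.dotProduct_mulVec_comm x v]
    ring
  have hpoly : HasDerivAt
      (fun t : ℝ => x ⬝ᵥ Λ *ᵥ x + t * (2 * (v ⬝ᵥ Λ *ᵥ x)) + t ^ 2 * (v ⬝ᵥ Λ *ᵥ v))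
      (2 * (v ⬝ᵥ Λ *ᵥ x)) 0 :=
    (((hasDerivAt_id' (0 : ℝ)).mul_const (2 * (v ⬝ᵥ Λ *ᵥ x))).const_add (x ⬝ᵥ Λ *ᵥ x)).add
      ((hasDerivAt_pow 2 (0 : ℝ)).mul_const (v ⬝ᵥ Λ *ᵥ v)) |>.congr_deriv (by simp)
  unfold HasLineDerivAt gaussianWeight
  refine ((hpoly.neg.div_const 2).exp.congr_deriv ?_).congr_of_eventuallyEq
    (Filter.Eventually.of_forall fun t => congrArg (fun q => exp (-q / 2)) (hexpand t))
  simp only [Pi.neg_apply, zero_mul, add_zero, zero_pow two_ne_zero]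
  ring

lemma integrable_one_add_norm_pow_mul_gaussianWeight (hΛ : Λ.PosDef) (k : ℕ) :
    Integrable fun x => (1 + ‖x‖) ^ k * gaussianWeight Λ x := by
  obtain ⟨c, hc, hcoer⟩ := hΛ.exists_pos_mul_sq_norm_le
  have hbound (m : ℕ) (x : ι → ℝ) :
      (1 + ‖x‖) ^ m * gaussianWeight Λ x ≤ m ! * exp (1 + 1 / (4 * (c / 2))) := by
    refine le_trans ?_ (one_add_pow_mul_exp_neg_mul_sq_le (by positivity) (norm_nonneg x) m)
    unfold gaussianWeight
    gcongr
    linarith [hcoer x]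
  have hnorm (m : ℕ) (x : ι → ℝ) :
      ‖(1 + ‖x‖) ^ m * gaussianWeight Λ x‖ = (1 + ‖x‖) ^ m * gaussianWeight Λ x :=
    Real.norm_of_nonneg (by have := gaussianWeight_pos Λ x; positivity)
  have hpow (p : ℕ) (x : ι → ℝ) :
      ‖x‖ ^ p * ‖(1 + ‖x‖) ^ k * gaussianWeight Λ x‖ ≤ (p + k) ! * exp (1 + 1 / (4 * (c / 2))) :=
    calc ‖x‖ ^ p * ‖(1 + ‖x‖) ^ k * gaussianWeight Λ x‖
        ≤ (1 + ‖x‖) ^ p * ((1 + ‖x‖) ^ k * gaussianWeight Λ x) := by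
          rw [hnorm]
          have := gaussianWeight_pos Λ x
          gcongr
          linarith
      _ = (1 + ‖x‖) ^ (p + k) * gaussianWeight Λ x := by ring
      _ ≤ _ := hbound (p + k) x
  simpa only [pow_zero, one_mul, hnorm] using integrable_of_le_of_pow_mul_le (μ := volume) (k := 0)
    (fun x => (hnorm k x).trans_le (hbound k x)) (fun x => hpow _ x) (by fun_prop)

lemma integrable_gaussianWeight (hΛ : Λ.PosDef) : Integrable (gaussianWeight Λ) := by
  simpa using integrable_one_add_norm_pow_mul_gaussianWeight hΛ 0

lemma Function.HasTemperateGrowth.integrable_mul_gaussianWeight {f : (ι → ℝ) → ℝ}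
    (hf : f.HasTemperateGrowth) (hΛ : Λ.PosDef) :
    Integrable fun x => f x * gaussianWeight Λ x := by
  obtain ⟨k, C, hle⟩ := hf.2 0
  refine ((integrable_one_add_norm_pow_mul_gaussianWeight hΛ k).const_mul C).mono'
    (by have := hf.1.continuous; fun_prop) (ae_of_all _ fun x => ?_)
  rw [norm_mul, Real.norm_of_nonneg (gaussianWeight_pos Λ x).le, ← mul_assoc]
  exact mul_le_mul_of_nonneg_right (by simpa using hle x) (gaussianWeight_pos Λ x).le

theorem integral_dotProduct_mulVec_mul_gaussianWeight (hΛ : Λ.PosDef) {f f' : (ι → ℝ) → ℝ}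
    {v : ι → ℝ} (hf : f.HasTemperateGrowth) (hf' : f'.HasTemperateGrowth)
    (hderiv : ∀ x, HasLineDerivAt ℝ f (f' x) x v) :
    ∫ x, (v ⬝ᵥ Λ *ᵥ x) * f x * gaussianWeight Λ x = ∫ x, f' x * gaussianWeight Λ x := by
  have hlin : (fun x => v ⬝ᵥ Λ *ᵥ x).HasTemperateGrowth := by
    simp only [dotProduct, mulVec]
    fun_prop
  have hibp := integral_bilinear_hasLineDerivAt_right_eq_neg_left_of_integrable
    (B := ContinuousLinearMap.mul ℝ ℝ) (g := gaussianWeight Λ)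
    (g' := fun x => -(v ⬝ᵥ Λ *ᵥ x) * gaussianWeight Λ x)
    (by simpa using hf'.integrable_mul_gaussianWeight hΛ)
    (by simpa [mul_assoc] using ((hf.mul hlin).neg).integrable_mul_gaussianWeight hΛ)
    (by simpa using hf.integrable_mul_gaussianWeight hΛ) (fun x _ => hderiv x)
    (fun x _ => hasLineDerivAt_gaussianWeight (isHermitian_iff_isSymm.1 hΛ.isHermitian) x v)
  simp only [ContinuousLinearMap.mul_apply'] at hibp
  rw [← neg_neg (∫ x, f' x * gaussianWeight Λ x), ← hibp, ← integral_neg]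
  congr 1 with x
  ring

variable [DecidableEq ι]

lemma Matrix.inv_apply_dotProduct_mulVec (hΛ : IsUnit Λ.det) (i : ι) (x : ι → ℝ) :
    Λ⁻¹ i ⬝ᵥ Λ *ᵥ x = x i := by
  change (Λ⁻¹ *ᵥ Λ *ᵥ x) i = x i
  rw [mulVec_mulVec, nonsing_inv_mul _ hΛ, one_mulVec]

theorem integral_apply_mul_mul_gaussianWeight (hΛ : Λ.PosDef) (i : ι) {f f' : (ι → ℝ) → ℝ}
    (hf : f.HasTemperateGrowth) (hf' : f'.HasTemperateGrowth)
    (hderiv : ∀ x, HasLineDerivAt ℝ f (f' x) x (Λ⁻¹ i)) :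
    ∫ x, x i * f x * gaussianWeight Λ x = ∫ x, f' x * gaussianWeight Λ x := by
  simpa only [Matrix.inv_apply_dotProduct_mulVec (isUnit_iff_ne_zero.2 hΛ.det_pos.ne')] using
    integral_dotProduct_mulVec_mul_gaussianWeight hΛ hf hf' hderiv

lemma integral_apply_mul_apply_mul_gaussianWeight (hΛ : Λ.PosDef) (i j : ι) :
    ∫ x, x i * x j * gaussianWeight Λ x = Λ⁻¹ i j * ∫ x, gaussianWeight Λ x := by
  rw [integral_apply_mul_mul_gaussianWeight hΛ i (f' := fun _ => Λ⁻¹ i j) (by fun_prop)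
    (by fun_prop) (hasLineDerivAt_apply j · _), integral_const_mul]

lemma integral_apply_mul_apply_mul_apply_mul_apply_mul_gaussianWeight (hΛ : Λ.PosDef)
    (i j k l : ι) :
    ∫ x, x i * x j * x k * x l * gaussianWeight Λ x =
      Λ⁻¹ i j * (∫ x, x k * x l * gaussianWeight Λ x) +
      Λ⁻¹ i k * (∫ x, x j * x l * gaussianWeight Λ x) +
      Λ⁻¹ i l * ∫ x, x j * x k * gaussianWeight Λ x := by
  have hint (a b c : ι) : Integrable fun x => Λ⁻¹ i a * (x b * x c * gaussianWeight Λ x) :=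
    ((by fun_prop : (fun x : ι → ℝ => x b * x c).HasTemperateGrowth).integrable_mul_gaussianWeight
      hΛ).const_mul _
  have hibp := integral_apply_mul_mul_gaussianWeight hΛ i (f := fun x => x j * x k * x l)
    (by fun_prop) (by fun_prop) fun x => ((hasLineDerivAt_apply j x _).mul
      (hasLineDerivAt_apply k x _)).mul (hasLineDerivAt_apply l x _)
  calc ∫ x, x i * x j * x k * x l * gaussianWeight Λ x
      = ∫ x, x i * (x j * x k * x l) * gaussianWeight Λ x := by simp only [mul_assoc]
    _ = ∫ x, ((Λ⁻¹ i j * (x k * x l * gaussianWeight Λ x)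
          + Λ⁻¹ i k * (x j * x l * gaussianWeight Λ x))
          + Λ⁻¹ i l * (x j * x k * gaussianWeight Λ x)) := by
        rw [hibp]
        congr 1 with x
        ring
    _ = _ := by
        rw [integral_add ?_ (hint l j k), integral_add (hint j k l) (hint k j l),
          integral_const_mul, integral_const_mul, integral_const_mul]
        exact (hint j k l).add (hint k j l)

theorem gaussian_fourth_moments_wick (n : ℕ) (i j k l : Fin n)
    (Λ : Matrix (Fin n) (Fin n) ℝ) (hΛ : Λ.PosDef)
    (S : Matrix (Fin n) (Fin n) ℝ) (hS : S = Λ⁻¹)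
    (Z : ℝ) (hZ : Z = ∫ x : Fin n → ℝ, Real.exp (-(x ⬝ᵥ Λ.mulVec x) / 2)) :
    Integrable (fun x : Fin n → ℝ =>
      x i * x j * x k * x l * Real.exp (-(x ⬝ᵥ Λ.mulVec x) / 2)) ∧
    (1 / Z) * ∫ x : Fin n → ℝ,
        x i * x j * x k * x l * Real.exp (-(x ⬝ᵥ Λ.mulVec x) / 2)
      = S i j * S k l + S i k * S j l + S i l * S j k := by
  subst hS
  replace hZ : ∫ x, gaussianWeight Λ x = Z := hZ.symm
  have hZpos : 0 < Z := hZ ▸ integral_exp_pos (integrable_gaussianWeight hΛ)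
  refine ⟨(by fun_prop : (fun x : Fin n → ℝ => x i * x j * x k * x l).HasTemperateGrowth)
    |>.integrable_mul_gaussianWeight hΛ, ?_⟩
  change 1 / Z * ∫ x, x i * x j * x k * x l * gaussianWeight Λ x = _
  rw [integral_apply_mul_apply_mul_apply_mul_apply_mul_gaussianWeight hΛ,
    integral_apply_mul_apply_mul_gaussianWeight hΛ, integral_apply_mul_apply_mul_gaussianWeight hΛ,
    integral_apply_mul_apply_mul_gaussianWeight hΛ, hZ]
  field_simp
end
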